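/- Let G be a group with two cobounded isometric actions on metric spaces X and X' that are equivalent, i.e. X ⪯ X' and X' ⪯ X (there exist coarsely G-equivariant coarsely Lipschitz maps in both directions). Then every coarsely G-equivariant, coarsely Lipschitz map X → X' is a quasi-isometry. -/

import Mathlib

noncomputable section

open Filter Metric Set Topology

/-! ## Gromov products, hyperbolicity, and the visual boundary -/

/-- The Gromov product of `x` and `y` with respect to `o`. -/
def gromovProduct {X : Type*} [MetricSpace X] (o x y : X) : ℝ :=
  (dist o x + dist o y - dist x y) / 2

/-- A metric space is `δ`-hyperbolic if the Gromov product four-point condition holds. -/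
def IsDeltaHyperbolic (X : Type*) [MetricSpace X] (δ : ℝ) : Prop :=
  ∀ o x y z : X, min (gromovProduct o x z) (gromovProduct o z y) - δ ≤ gromovProduct o x y

/-- A metric space is Gromov hyperbolic if it is `δ`-hyperbolic for some `δ ≥ 0`. -/
def GromovHyperbolic (X : Type*) [MetricSpace X] : Prop :=
  ∃ δ : ℝ, 0 ≤ δ ∧ IsDeltaHyperbolic X δ

/-- A sequence converges to infinity if the Gromov products `(x_i | x_j)_o` tend to `∞`
(this is independent of the basepoint, so we quantify over all basepoints). -/
def ConvergesToInfinity {X : Type*} [MetricSpace X] (s : ℕ → X) : Prop :=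
  ∀ o : X, Tendsto (fun p : ℕ × ℕ => gromovProduct o (s p.1) (s p.2)) atTop atTop

/-- Two sequences converging to infinity are equivalent if `(x_i | y_i)_o → ∞`. -/
def AsympEquiv {X : Type*} [MetricSpace X] (s t : ℕ → X) : Prop :=
  ∀ o : X, Tendsto (fun i => gromovProduct o (s i) (t i)) atTop atTop

/-- Sequences converging to infinity. -/
abbrev BoundarySeq (X : Type*) [MetricSpace X] : Type _ :=
  { s : ℕ → X // ConvergesToInfinity s }

/-- The visual boundary (boundary at infinity) of a metric space:
equivalence classes of sequences converging to infinity. -/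
def GromovBoundary (X : Type*) [MetricSpace X] : Type _ :=
  Quot (fun s t : BoundarySeq X => AsympEquiv s.1 t.1)

/-- The boundary point represented by a sequence converging to infinity. -/
def boundaryPt {X : Type*} [MetricSpace X] (s : BoundarySeq X) : GromovBoundary X :=
  Quot.mk (fun s t : BoundarySeq X => AsympEquiv s.1 t.1) s

/-- The Gromov product of two boundary points with respect to `o`:
the infimum over representatives of the liminf of the Gromov products. -/
noncomputable def boundaryGromovProduct {X : Type*} [MetricSpace X] (o : X)
    (ξ η : GromovBoundary X) : ℝ :=
  sInf { r : ℝ | ∃ s t : BoundarySeq X, boundaryPt s = ξ ∧ boundaryPt t = η ∧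
    r = liminf (fun i => gromovProduct o (s.1 i) (t.1 i)) atTop }

/-- The visual topology on the boundary at infinity, generated by the neighbourhood
bases `U_{o,R}(ξ) = {η | (ξ|η)_o > R}`. -/
def visualTopology (X : Type*) [MetricSpace X] : TopologicalSpace (GromovBoundary X) :=
  TopologicalSpace.generateFrom
    { U : Set (GromovBoundary X) | ∃ (o : X) (ξ : GromovBoundary X) (R : ℝ),
        U = { η | R < boundaryGromovProduct o ξ η } }

/-- A path `γ : [a,∞) → X` defines the boundary point `ξ` if every monotone unbounded
sequence of parameters yields a sequence converging to infinity representing `ξ`. -/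
def DefinesBoundaryPoint {X : Type*} [MetricSpace X] (γ : ℝ → X) (a : ℝ)
    (ξ : GromovBoundary X) : Prop :=
  ∀ t : ℕ → ℝ, (∀ i, a ≤ t i) → Monotone t → Tendsto t atTop atTop →
    ∃ h : ConvergesToInfinity (fun i => γ (t i)), boundaryPt ⟨fun i => γ (t i), h⟩ = ξ

/-! ## Quasi-rulers, quasi-geodesics, coarse maps -/

/-- An unparametrised `D`-quasi-ruler on a (closed) interval `I ⊆ ℝ`. -/
structure IsQuasiRuler {X : Type*} [MetricSpace X] (D : ℝ) (I : Set ℝ) (γ : ℝ → X) : Prop where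
  ruled : ∀ t ∈ I, ∀ s ∈ I, ∀ r ∈ I, t < s → s < r →
    dist (γ t) (γ s) + dist (γ s) (γ r) ≤ dist (γ t) (γ r) + D
  noJump : ∀ t₀ ∈ I, ∃ c : ℝ, c < D ∧ ∃ ε : ℝ, 0 < ε ∧
    ∀ t ∈ I, |t - t₀| < ε → dist (γ t) (γ t₀) ≤ c

/-- A metric space admits a `D`-quasi-ruling if any two points are connected by an
unparametrised `D`-quasi-ruler. -/
def AdmitsQuasiRuling (X : Type*) [MetricSpace X] (D : ℝ) : Prop :=
  ∀ x y : X, ∃ (a b : ℝ) (γ : ℝ → X), a ≤ b ∧ γ a = x ∧ γ b = y ∧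
    IsQuasiRuler D (Icc a b) γ

/-- `(K,C)`-coarsely Lipschitz maps. -/
def CoarselyLipschitzWith {Y X : Type*} [MetricSpace Y] [MetricSpace X]
    (K C : ℝ) (f : Y → X) : Prop :=
  ∀ x y : Y, dist (f x) (f y) ≤ K * dist x y + C

def CoarselyLipschitz {Y X : Type*} [MetricSpace Y] [MetricSpace X] (f : Y → X) : Prop :=
  ∃ K C : ℝ, 1 ≤ K ∧ 0 ≤ C ∧ CoarselyLipschitzWith K C f

/-- `(K,C)`-quasi-isometric embeddings. -/
def IsQuasiIsometricEmbeddingWith {Y X : Type*} [MetricSpace Y] [MetricSpace X]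
    (K C : ℝ) (f : Y → X) : Prop :=
  ∀ x y : Y, dist x y / K - C ≤ dist (f x) (f y) ∧ dist (f x) (f y) ≤ K * dist x y + C

/-- `(K,C)`-quasi-isometries. -/
def IsQuasiIsometryWith {Y X : Type*} [MetricSpace Y] [MetricSpace X]
    (K C : ℝ) (f : Y → X) : Prop :=
  IsQuasiIsometricEmbeddingWith K C f ∧ ∀ x : X, ∃ y : Y, dist (f y) x ≤ C

def IsQuasiIsometry {Y X : Type*} [MetricSpace Y] [MetricSpace X] (f : Y → X) : Prop :=
  ∃ K C : ℝ, 1 ≤ K ∧ 0 ≤ C ∧ IsQuasiIsometryWith K C f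

/-- `(K,C)`-quasi-geodesics parametrised over a subinterval `I ⊆ ℝ`. -/
def IsQuasiGeodesicOn {X : Type*} [MetricSpace X] (K C : ℝ) (I : Set ℝ) (γ : ℝ → X) : Prop :=
  ∀ s ∈ I, ∀ t ∈ I, |s - t| / K - C ≤ dist (γ s) (γ t) ∧ dist (γ s) (γ t) ≤ K * |s - t| + C

/-- An unparametrised quasi-geodesic: a path admitting an orientation-preserving
reparametrisation which is a quasi-geodesic. -/
def IsUnparamQuasiGeodesicOn {X : Type*} [MetricSpace X] (I : Set ℝ) (γ : ℝ → X) : Prop :=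
  ∃ (φ : ℝ → ℝ) (K C : ℝ), 1 ≤ K ∧ 0 ≤ C ∧ StrictMonoOn φ I ∧ BijOn φ I I ∧
    IsQuasiGeodesicOn K C I (fun t => γ (φ t))

/-- A geodesic metric space: any two points are joined by an isometrically embedded segment. -/
def GeodesicSpace (Y : Type*) [MetricSpace Y] : Prop :=
  ∀ x y : Y, ∃ γ : ℝ → Y, γ 0 = x ∧ γ (dist x y) = y ∧
    ∀ s ∈ Icc (0 : ℝ) (dist x y), ∀ t ∈ Icc (0 : ℝ) (dist x y), dist (γ s) (γ t) = |s - t|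

/-! ## Group actions -/

/-- The action of `G` is by isometries. -/
def IsometricAction (G X : Type*) [Group G] [MetricSpace X] [MulAction G X] : Prop :=
  ∀ g : G, Isometry (fun x : X => g • x)

/-- A cobounded action: translates of some bounded set cover the space. -/
def CoboundedAction (G X : Type*) [Group G] [MetricSpace X] [MulAction G X] : Prop :=
  ∃ B : Set X, Bornology.IsBounded B ∧ ∀ x : X, ∃ g : G, g • x ∈ B

/-- A cocompact action: translates of some compact set cover the space. -/
def CocompactAction (G Y : Type*) [Group G] [MetricSpace Y] [MulAction G Y] : Prop :=
  ∃ K : Set Y, IsCompact K ∧ ∀ y : Y, ∃ g : G, g • y ∈ K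

/-- A geometric action: isometric, properly discontinuous and cocompact. -/
def GeometricAction (G Y : Type*) [Group G] [MetricSpace Y] [MulAction G Y] : Prop :=
  IsometricAction G Y ∧ ProperlyDiscontinuousSMul G Y ∧ CocompactAction G Y

/-- Coarse `G`-equivariance of a map between two `G`-spaces. -/
def CoarselyEquivariant (G : Type*) {Y X : Type*} [Group G] [MetricSpace Y] [MetricSpace X]
    [MulAction G Y] [MulAction G X] (f : Y → X) : Prop :=
  ∃ C : ℝ, 0 ≤ C ∧ ∀ (g : G) (y : Y), dist (f (g • y)) (g • f y) ≤ C

/-- A hyperbolic projection `(G, Y, X)`: a finitely generated group `G` acting geometrically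
on a geodesic metric space `Y` and coboundedly by isometries on a Gromov hyperbolic space `X`
admitting a `D`-quasi-ruling. -/
structure HyperbolicProjection (G Y X : Type*) [Group G] [MetricSpace Y] [MetricSpace X]
    [MulAction G Y] [MulAction G X] : Prop where
  fg : Group.FG G
  geodesicY : GeodesicSpace Y
  geometricY : GeometricAction G Y
  isometricX : IsometricAction G X
  coboundedX : CoboundedAction G X
  hyperbolicX : GromovHyperbolic X
  ruledX : ∃ D : ℝ, 0 ≤ D ∧ AdmitsQuasiRuling X D

/-- An induced projection map of a hyperbolic projection: any coarsely `G`-equivariant,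
coarsely Lipschitz map `Y → X`. -/
def InducedProjection (G : Type*) {Y X : Type*} [Group G] [MetricSpace Y] [MetricSpace X]
    [MulAction G Y] [MulAction G X] (p : Y → X) : Prop :=
  CoarselyEquivariant G p ∧ CoarselyLipschitz p
/-! ## Morse and sublinearly Morse boundaries -/

/-- Finite Hausdorff distance between two subsets. -/
def FiniteHausdorffDist {Y : Type*} [MetricSpace Y] (A B : Set Y) : Prop :=
  EMetric.hausdorffEdist A B < ⊤

/-- A quasi-geodesic ray, parametrised over `[0, ∞)`. -/
def IsQuasiGeodesicRay {Y : Type*} [MetricSpace Y] (γ : ℝ → Y) : Prop :=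
  ∃ K C : ℝ, 1 ≤ K ∧ 0 ≤ C ∧ IsQuasiGeodesicOn K C (Ici 0) γ

/-- A geodesic ray, parametrised over `[0, ∞)`. -/
def IsGeodesicRay {Y : Type*} [MetricSpace Y] (γ : ℝ → Y) : Prop :=
  ∀ s ∈ Ici (0 : ℝ), ∀ t ∈ Ici (0 : ℝ), dist (γ s) (γ t) = |s - t|

/-- A Morse subset: there is a gauge `μ` such that every `(K,C)`-quasi-geodesic segment with
endpoints on `Z` stays in the `μ(K,C)`-neighbourhood of `Z`. -/
def IsMorseSet {Y : Type*} [MetricSpace Y] (Z : Set Y) : Prop :=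
  ∃ μ : ℝ → ℝ → ℝ, ∀ K C : ℝ, 1 ≤ K → 0 ≤ C → ∀ (a b : ℝ) (β : ℝ → Y), a ≤ b →
    IsQuasiGeodesicOn K C (Icc a b) β → β a ∈ Z → β b ∈ Z →
    ∀ t ∈ Icc a b, infDist (β t) Z ≤ μ K C

/-- Morse quasi-geodesic rays. -/
abbrev MorseRay (Y : Type*) [MetricSpace Y] : Type _ :=
  { γ : ℝ → Y // IsQuasiGeodesicRay γ ∧ IsMorseSet (γ '' Ici 0) }

/-- The Morse boundary `∂₁ Y`: Morse quasi-geodesic rays modulo finite Hausdorff distance. -/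
def MorseBoundary (Y : Type*) [MetricSpace Y] : Type _ :=
  Quot (fun γ γ' : MorseRay Y => FiniteHausdorffDist (γ.1 '' Ici 0) (γ'.1 '' Ici 0))

def morsePt {Y : Type*} [MetricSpace Y] (γ : MorseRay Y) : MorseBoundary Y :=
  Quot.mk (fun γ γ' : MorseRay Y => FiniteHausdorffDist (γ.1 '' Ici 0) (γ'.1 '' Ici 0)) γ

/-- Morse-injectivity of a projection map: every unbounded Morse geodesic (ray or bi-infinite)
in `Y` projects to an unbounded unparametrised quasi-geodesic in `X`. -/
def MorseInjective {Y X : Type*} [MetricSpace Y] [MetricSpace X] (p : Y → X) : Prop :=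
  ∀ (I : Set ℝ) (γ : ℝ → Y), (I = Ici (0 : ℝ) ∨ I = univ) →
    (∀ s ∈ I, ∀ t ∈ I, dist (γ s) (γ t) = |s - t|) →
    IsMorseSet (γ '' I) → ¬ Bornology.IsBounded (γ '' I) →
    IsUnparamQuasiGeodesicOn I (fun t => p (γ t)) ∧
      ¬ Bornology.IsBounded ((fun t => p (γ t)) '' I)

/-- `f` is the boundary map `∂p` induced by the projection `p`: the class of every Morse
quasi-geodesic ray `γ` is sent to the boundary point defined by `p ∘ γ`. -/
def IsInducedBoundaryMap {Y X : Type*} [MetricSpace Y] [MetricSpace X] (p : Y → X)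
    (f : MorseBoundary Y → GromovBoundary X) : Prop :=
  ∀ γ : MorseRay Y, DefinesBoundaryPoint (fun t => p (γ.1 t)) 0 (f (morsePt γ))

/-- `f` is the boundary map `∂Ψ` induced by a quasi-isometry `Ψ` on Morse boundaries:
the class of `γ` is sent to the class of `Ψ ∘ γ`. -/
def IsInducedMorseBoundaryMap {Y Y' : Type*} [MetricSpace Y] [MetricSpace Y'] (Ψ : Y → Y')
    (f : MorseBoundary Y → MorseBoundary Y') : Prop :=
  ∀ γ : MorseRay Y,
    ∃ h : IsQuasiGeodesicRay (fun t => Ψ (γ.1 t)) ∧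
        IsMorseSet ((fun t => Ψ (γ.1 t)) '' Ici 0),
      f (morsePt γ) = morsePt (⟨fun t => Ψ (γ.1 t), h⟩ : MorseRay Y')

/-- `f` is the boundary map `∂Φ` induced by a map `Φ` between hyperbolic spaces:
the class of a sequence `(x_i)` is sent to the class of `(Φ x_i)`. -/
def IsInducedGromovBoundaryMap {X X' : Type*} [MetricSpace X] [MetricSpace X'] (Φ : X → X')
    (f : GromovBoundary X → GromovBoundary X') : Prop :=
  ∀ s : BoundarySeq X, ∃ h : ConvergesToInfinity (fun i => Φ (s.1 i)),
    f (boundaryPt s) = boundaryPt (⟨fun i => Φ (s.1 i), h⟩ : BoundarySeq X')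

/-! ## Sublinear functions and `κ`-Morse boundaries -/

/-- A sublinear function: monotone increasing, concave, non-negative, with `κ(t)/t → 0`. -/
def IsSublinear (κ : ℝ → ℝ) : Prop :=
  (∀ t ∈ Ici (0 : ℝ), 0 ≤ κ t) ∧ MonotoneOn κ (Ici 0) ∧ ConcaveOn ℝ (Ici 0) κ ∧
    Tendsto (fun t => κ t / t) atTop (nhds 0)

/-- The `(κ, n)`-neighbourhood of `Z` with respect to the basepoint `o`. -/
def kappaNbhd {Y : Type*} [MetricSpace Y] (o : Y) (κ : ℝ → ℝ) (Z : Set Y) (n : ℝ) : Set Y :=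
  { y | infDist y Z ≤ n * κ (dist o y) }

/-- `Z` is `κ`-Morse with a specified Morse gauge `N`. -/
def IsKappaMorseWith {Y : Type*} [MetricSpace Y] (o : Y) (κ : ℝ → ℝ) (N : ℝ → ℝ → ℝ)
    (Z : Set Y) : Prop :=
  ∀ K C : ℝ, 1 ≤ K → 0 ≤ C → ∀ (a b : ℝ) (β : ℝ → Y), a ≤ b →
    IsQuasiGeodesicOn K C (Icc a b) β → β a ∈ Z → β b ∈ Z →
    ∀ t ∈ Icc a b, β t ∈ kappaNbhd o κ Z (N K C)

/-- `Z` is `κ`-Morse. -/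
def IsKappaMorse {Y : Type*} [MetricSpace Y] (o : Y) (κ : ℝ → ℝ) (Z : Set Y) : Prop :=
  ∃ N : ℝ → ℝ → ℝ, IsKappaMorseWith o κ N Z

/-- Two sets `κ`-fellow travel (are `κ`-close) if each lies in a `κ`-neighbourhood
of the other. -/
def KappaClose {Y : Type*} [MetricSpace Y] (o : Y) (κ : ℝ → ℝ) (A B : Set Y) : Prop :=
  (∃ n : ℝ, 0 < n ∧ A ⊆ kappaNbhd o κ B n) ∧ (∃ n : ℝ, 0 < n ∧ B ⊆ kappaNbhd o κ A n)

/-- `κ`-Morse quasi-geodesic rays. -/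
abbrev KappaMorseRay (Y : Type*) [MetricSpace Y] (o : Y) (κ : ℝ → ℝ) : Type _ :=
  { γ : ℝ → Y // IsQuasiGeodesicRay γ ∧ IsKappaMorse o κ (γ '' Ici 0) }

/-- The `κ`-Morse boundary `∂_κ Y`: `κ`-Morse quasi-geodesic rays modulo `κ`-fellow
travelling. -/
def KappaBoundary (Y : Type*) [MetricSpace Y] (o : Y) (κ : ℝ → ℝ) : Type _ :=
  Quot (fun γ γ' : KappaMorseRay Y o κ => KappaClose o κ (γ.1 '' Ici 0) (γ'.1 '' Ici 0))

def kappaPt {Y : Type*} [MetricSpace Y] {o : Y} {κ : ℝ → ℝ} (γ : KappaMorseRay Y o κ) :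
    KappaBoundary Y o κ :=
  Quot.mk (fun γ γ' : KappaMorseRay Y o κ => KappaClose o κ (γ.1 '' Ici 0) (γ'.1 '' Ici 0)) γ

/-- `κ`-injectivity of a hyperbolic projection with projection map `p`: the projection of every
`κ`-Morse quasi-geodesic ray defines a boundary point, and two `κ`-Morse quasi-geodesic rays
are `κ`-close iff their projections define the same boundary point. -/
def KappaInjective {Y X : Type*} [MetricSpace Y] [MetricSpace X] (o : Y) (κ : ℝ → ℝ)
    (p : Y → X) : Prop :=
  (∀ γ : ℝ → Y, IsQuasiGeodesicRay γ → IsKappaMorse o κ (γ '' Ici 0) →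
    ∃ ξ : GromovBoundary X, DefinesBoundaryPoint (fun t => p (γ t)) 0 ξ) ∧
  (∀ γ γ' : ℝ → Y, IsQuasiGeodesicRay γ → IsKappaMorse o κ (γ '' Ici 0) →
    IsQuasiGeodesicRay γ' → IsKappaMorse o κ (γ' '' Ici 0) →
    (KappaClose o κ (γ '' Ici 0) (γ' '' Ici 0) ↔
      ∃ ξ : GromovBoundary X, DefinesBoundaryPoint (fun t => p (γ t)) 0 ξ ∧
        DefinesBoundaryPoint (fun t => p (γ' t)) 0 ξ))

/-- `f` is the boundary map `∂p` induced by `p` on the `κ`-Morse boundary. -/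
def IsInducedKappaBoundaryMap {Y X : Type*} [MetricSpace Y] [MetricSpace X] (o : Y)
    (κ : ℝ → ℝ) (p : Y → X) (f : KappaBoundary Y o κ → GromovBoundary X) : Prop :=
  ∀ γ : KappaMorseRay Y o κ, DefinesBoundaryPoint (fun t => p (γ.1 t)) 0 (f (kappaPt γ))

/-- `f` is the boundary map `∂Ψ` induced by a quasi-isometry `Ψ` on `κ`-Morse boundaries. -/
def IsInducedKappaQIMap {Y Y' : Type*} [MetricSpace Y] [MetricSpace Y'] (o : Y) (o' : Y')
    (κ : ℝ → ℝ) (Ψ : Y → Y')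
    (f : KappaBoundary Y o κ → KappaBoundary Y' o' κ) : Prop :=
  ∀ γ : KappaMorseRay Y o κ,
    ∃ h : IsQuasiGeodesicRay (fun t => Ψ (γ.1 t)) ∧
        IsKappaMorse o' κ ((fun t => Ψ (γ.1 t)) '' Ici 0),
      f (kappaPt γ) = kappaPt (⟨fun t => Ψ (γ.1 t), h⟩ : KappaMorseRay Y' o' κ)
/-! ## Coarse medians -/

/-- The median of three real numbers. -/
def realMedian (a b c : ℝ) : ℝ := max (min a b) (min (max a b) c)

/-- A coarse median with constant `C`. -/
def IsCoarseMedianWith {Y : Type*} [MetricSpace Y] (C : ℝ) (μ : Y → Y → Y → Y) : Prop :=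
  (∀ a b c : Y, μ a a b = a ∧ μ a b c = μ b a c ∧ μ a b c = μ b c a) ∧
  (∀ a b c x : Y, dist (μ (μ a x b) x c) (μ a x (μ b x c)) ≤ C) ∧
  (∀ a b c x : Y, dist (μ a b c) (μ x b c) ≤ C * dist a x + C)

/-- A coarse median. -/
def IsCoarseMedian {Y : Type*} [MetricSpace Y] (μ : Y → Y → Y → Y) : Prop :=
  ∃ C : ℝ, 0 ≤ C ∧ IsCoarseMedianWith C μ

/-- A coarse median map between coarse median spaces. -/
def IsCoarseMedianMap {Y Y' : Type*} [MetricSpace Y] [MetricSpace Y']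
    (μ : Y → Y → Y → Y) (μ' : Y' → Y' → Y' → Y') (f : Y → Y') : Prop :=
  ∃ D : ℝ, 0 ≤ D ∧ ∀ a b c : Y, dist (f (μ a b c)) (μ' (f a) (f b) (f c)) ≤ D

/-- A `G`-invariant coarse median (invariance up to uniformly bounded distance). -/
def EquivariantMedian (G : Type*) {Y : Type*} [Group G] [MetricSpace Y] [MulAction G Y]
    (μ : Y → Y → Y → Y) : Prop :=
  ∃ C : ℝ, 0 ≤ C ∧ ∀ (g : G) (a b c : Y), dist (g • μ a b c) (μ (g • a) (g • b) (g • c)) ≤ C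

/-- A `D`-median ray: a coarse median map (with constant `D`) from `[0,∞)`
with the standard median of `ℝ`. -/
def IsMedianRayWith {Y : Type*} [MetricSpace Y] (D : ℝ) (μ : Y → Y → Y → Y)
    (γ : ℝ → Y) : Prop :=
  ∀ a ∈ Ici (0 : ℝ), ∀ b ∈ Ici (0 : ℝ), ∀ c ∈ Ici (0 : ℝ),
    dist (γ (realMedian a b c)) (μ (γ a) (γ b) (γ c)) ≤ D

/-- A `μ`-median ray. -/
def IsMedianRay {Y : Type*} [MetricSpace Y] (μ : Y → Y → Y → Y) (γ : ℝ → Y) : Prop :=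
  ∃ D : ℝ, 0 ≤ D ∧ IsMedianRayWith D μ γ

/-- `∂_κ Y` has `μ`-median representatives: every point of the `κ`-Morse boundary is
represented by a `μ`-median quasi-geodesic ray. -/
def HasMedianRepresentatives {Y : Type*} [MetricSpace Y] (o : Y) (κ : ℝ → ℝ)
    (μ : Y → Y → Y → Y) : Prop :=
  ∀ γ : KappaMorseRay Y o κ, ∃ γ' : KappaMorseRay Y o κ, IsMedianRay μ γ'.1 ∧
    KappaClose o κ (γ.1 '' Ici 0) (γ'.1 '' Ici 0)

/-- `(κ, μ)`-injectivity of a hyperbolic projection with projection map `p`. -/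
def KappaMuInjective {Y X : Type*} [MetricSpace Y] [MetricSpace X] (o : Y) (κ : ℝ → ℝ)
    (μ : Y → Y → Y → Y) (p : Y → X) : Prop :=
  (∀ γ : ℝ → Y, IsQuasiGeodesicRay γ → IsKappaMorse o κ (γ '' Ici 0) → IsMedianRay μ γ →
    ∃ ξ : GromovBoundary X, DefinesBoundaryPoint (fun t => p (γ t)) 0 ξ) ∧
  (∀ γ γ' : ℝ → Y, IsQuasiGeodesicRay γ → IsKappaMorse o κ (γ '' Ici 0) → IsMedianRay μ γ →
    IsQuasiGeodesicRay γ' → IsKappaMorse o κ (γ' '' Ici 0) → IsMedianRay μ γ' →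
    (KappaClose o κ (γ '' Ici 0) (γ' '' Ici 0) ↔
      ∃ ξ : GromovBoundary X, DefinesBoundaryPoint (fun t => p (γ t)) 0 ξ ∧
        DefinesBoundaryPoint (fun t => p (γ' t)) 0 ξ))

/-- `f` is the boundary map `∂p` induced by `p` on the `κ`-Morse boundary, defined via
`μ`-median representatives. -/
def IsInducedKappaMuBoundaryMap {Y X : Type*} [MetricSpace Y] [MetricSpace X] (o : Y)
    (κ : ℝ → ℝ) (μ : Y → Y → Y → Y) (p : Y → X)
    (f : KappaBoundary Y o κ → GromovBoundary X) : Prop :=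
  ∀ γ : KappaMorseRay Y o κ, IsMedianRay μ γ.1 →
    DefinesBoundaryPoint (fun t => p (γ.1 t)) 0 (f (kappaPt γ))
/-! ## Trees and Cantor chains -/

/-- A geodesic ray from `root` in the graph `T`. -/
structure TreeRay {V : Type*} (T : SimpleGraph V) (root : V) where
  toFun : ℕ → V
  init : toFun 0 = root
  adj : ∀ n, T.Adj (toFun n) (toFun (n + 1))
  inj : Function.Injective toFun

/-- The visual topology on the space of rays from `root`, generated by the sets
`U_v` of rays passing through a vertex `v`. -/
def treeTopology {V : Type*} (T : SimpleGraph V) (root : V) :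
    TopologicalSpace (TreeRay T root) :=
  TopologicalSpace.generateFrom
    { U : Set (TreeRay T root) | ∃ v : V, U = { r | ∃ n, r.toFun n = v } }

/-- The rays from `root` that lie in the subgraph `S`. -/
def raysIn {V : Type*} {T : SimpleGraph V} (root : V) (S : T.Subgraph) :
    Set (TreeRay T root) :=
  { r | ∀ n, S.Adj (r.toFun n) (r.toFun (n + 1)) }

/-- Every vertex has countably infinite degree. -/
def CountablyBranching {V : Type*} (T : SimpleGraph V) : Prop :=
  ∀ v : V, (T.neighborSet v).Countable ∧ (T.neighborSet v).Infinite

/-- A nested family of locally finite subtrees, all of whose vertices have degree at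
least three, containing the root. -/
def SubtreeFamily {V : Type*} (T : SimpleGraph V) (root : V) (S : ℕ → T.Subgraph) : Prop :=
  (∀ i, root ∈ (S i).verts) ∧
  (∀ i, (S i).Connected) ∧
  (∀ i, ∀ v ∈ (S i).verts, ((S i).neighborSet v).Finite) ∧
  (∀ i, ∀ v ∈ (S i).verts, 3 ≤ ((S i).neighborSet v).ncard) ∧
  (∀ i, S i ≤ S (i + 1))

/-- The family is strongly entwined: each vertex of `S i` has strictly larger degree
in `S (i+1)`. -/
def StronglyEntwined {V : Type*} (T : SimpleGraph V) (S : ℕ → T.Subgraph) : Prop :=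
  ∀ i, ∀ v ∈ (S i).verts, (S i).neighborSet v ⊂ (S (i + 1)).neighborSet v

/-- The family fills `T`: every edge of `T` lies in some `S i`. -/
def FillsTree {V : Type*} (T : SimpleGraph V) (S : ℕ → T.Subgraph) : Prop :=
  ∀ u v : V, T.Adj u v → ∃ i, (S i).Adj u v

/-- The subtree spanned (convex hull from the root) by a family of rays from the root. -/
def raysHull {V : Type*} {T : SimpleGraph V} (root : V) (R : Set (TreeRay T root)) :
    T.Subgraph where
  verts := { v | ∃ r ∈ R, ∃ n, r.toFun n = v }
  Adj u v := ∃ r ∈ R, ∃ n, (r.toFun n = u ∧ r.toFun (n + 1) = v) ∨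
    (r.toFun n = v ∧ r.toFun (n + 1) = u)
  adj_sub := by
    rintro u v ⟨r, -, n, h | h⟩
    · rw [← h.1, ← h.2]; exact r.adj n
    · rw [← h.1, ← h.2]; exact (r.adj n).symm
  edge_vert := by
    rintro u v ⟨r, hr, n, h | h⟩
    · exact ⟨r, hr, n, h.1⟩
    · exact ⟨r, hr, n + 1, h.2⟩
  symm := by
    constructor
    rintro u v ⟨r, hr, n, h⟩
    exact ⟨r, hr, n, h.symm⟩

/-- A Cantor chain: a topological space homeomorphic to the union `⋃ i ∂∞ T_i ⊆ ∂∞ T∞`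
for a filling family of strongly entwined subtrees of the tree `T∞` of countably
infinite valence. -/
def IsCantorChain (Z : Type*) (τ : TopologicalSpace Z) : Prop :=
  ∃ (V : Type) (T : SimpleGraph V) (root : V) (S : ℕ → T.Subgraph),
    T.IsTree ∧ CountablyBranching T ∧ SubtreeFamily T root S ∧
    StronglyEntwined T S ∧ FillsTree T S ∧
    ∃ e : Z → TreeRay T root, Function.Injective e ∧
      range e = ⋃ i, raysIn root (S i) ∧
      τ = TopologicalSpace.induced e (treeTopology T root)

/-! The composite of `f` with a coarsely equivariant map back is a coarsely equivariant
self-map of a cobounded space, hence a bounded distance from the identity: every point is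
translated into a fixed bounded set, on which this is clear. So `f` has a coarse inverse. -/

section CoarseMaps

variable {X Y Z : Type*} [MetricSpace X] [MetricSpace Y] [MetricSpace Z]

theorem CoarselyLipschitz.comp {g : Y → Z} {f : X → Y} (hg : CoarselyLipschitz g)
    (hf : CoarselyLipschitz f) : CoarselyLipschitz (g ∘ f) := by
  obtain ⟨Kg, Cg, hKg, hCg, hg⟩ := hg
  obtain ⟨Kf, Cf, hKf, hCf, hf⟩ := hf
  refine ⟨Kg * Kf, Kg * Cf + Cg, one_le_mul_of_one_le_of_one_le hKg hKf, by positivity,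
    fun x y => ?_⟩
  calc dist (g (f x)) (g (f y)) ≤ Kg * dist (f x) (f y) + Cg := hg _ _
    _ ≤ Kg * (Kf * dist x y + Cf) + Cg := by gcongr; exact hf x y
    _ = Kg * Kf * dist x y + (Kg * Cf + Cg) := by ring

theorem CoarselyLipschitz.isBounded_image {f : X → Y} (hf : CoarselyLipschitz f) {B : Set X}
    (hB : Bornology.IsBounded B) : Bornology.IsBounded (f '' B) := by
  obtain ⟨K, C, hK, -, hf⟩ := hf
  obtain ⟨r, hr⟩ := isBounded_iff.mp hB
  refine isBounded_iff.mpr ⟨K * r + C, ?_⟩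
  rintro _ ⟨x, hx, rfl⟩ _ ⟨y, hy, rfl⟩
  calc dist (f x) (f y) ≤ K * dist x y + C := hf x y
    _ ≤ K * r + C := by have := zero_le_one.trans hK; gcongr; exact hr hx hy

theorem CoarselyEquivariant.comp {G : Type*} [Group G] [MulAction G X] [MulAction G Y]
    [MulAction G Z] {g : Y → Z} {f : X → Y} (hg : CoarselyEquivariant G g)
    (hg' : CoarselyLipschitz g) (hf : CoarselyEquivariant G f) :
    CoarselyEquivariant G (g ∘ f) := by
  obtain ⟨Cg, hCg, hg⟩ := hg
  obtain ⟨K, C, hK, hC, hg'⟩ := hg'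
  obtain ⟨Cf, hCf, hf⟩ := hf
  refine ⟨K * Cf + C + Cg, by positivity, fun a x => ?_⟩
  calc dist (g (f (a • x))) (a • g (f x))
      ≤ dist (g (f (a • x))) (g (a • f x)) + dist (g (a • f x)) (a • g (f x)) :=
        dist_triangle _ _ _
    _ ≤ (K * dist (f (a • x)) (a • f x) + C) + Cg := add_le_add (hg' _ _) (hg a _)
    _ ≤ (K * Cf + C) + Cg := by gcongr; exact hf a x

theorem CoarselyEquivariant.exists_dist_le_of_cobounded {G : Type*} [Group G] [MulAction G X]
    (hiso : IsometricAction G X) (hcb : CoboundedAction G X) {w : X → X}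
    (hw : CoarselyEquivariant G w) (hw' : CoarselyLipschitz w) :
    ∃ M, 0 ≤ M ∧ ∀ x, dist (w x) x ≤ M := by
  obtain ⟨B, hB, hcover⟩ := hcb
  obtain ⟨Cw, hCw, hw⟩ := hw
  have hS : Bornology.IsBounded (B ∪ w '' B) := hB.union (hw'.isBounded_image hB)
  refine ⟨Cw + diam (B ∪ w '' B), add_nonneg hCw diam_nonneg, fun x => ?_⟩
  obtain ⟨a, hax⟩ := hcover x
  calc dist (w x) x = dist (a • w x) (a • x) := ((hiso a).dist_eq _ _).symm
    _ ≤ dist (a • w x) (w (a • x)) + dist (w (a • x)) (a • x) := dist_triangle _ _ _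
    _ ≤ Cw + diam (B ∪ w '' B) := add_le_add (dist_comm (a • w x) _ ▸ hw a x)
        (dist_le_diam_of_mem hS (Or.inr ⟨_, hax, rfl⟩) (Or.inl hax))

theorem IsQuasiIsometry.of_coarse_inverse {f : X → Y} {u : Y → X} (hf : CoarselyLipschitz f)
    (hu : CoarselyLipschitz u) {M M' : ℝ} (hM : 0 ≤ M) (hM' : 0 ≤ M')
    (huf : ∀ x, dist (u (f x)) x ≤ M) (hfu : ∀ y, dist (f (u y)) y ≤ M') :
    IsQuasiIsometry f := by
  obtain ⟨Ku, Cu, hKu, hCu, hu⟩ := hu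
  obtain ⟨Kf, Cf, -, hCf, hf⟩ := hf
  have hKu0 : 0 < Ku := zero_lt_one.trans_le hKu
  refine ⟨max Ku Kf, Cu + 2 * M + Cf + M', hKu.trans (le_max_left _ _), by positivity,
    fun x y => ⟨?_, ?_⟩, fun y => ⟨u y, by linarith [hfu y]⟩⟩
  · have hxy : dist x y ≤ Ku * dist (f x) (f y) + (Cu + 2 * M) := by
      linarith [dist_triangle4 x (u (f x)) (u (f y)) y, dist_comm x (u (f x)), huf x, huf y,
        hu (f x) (f y)]
    have : dist x y / max Ku Kf ≤ dist (f x) (f y) + (Cu + 2 * M) :=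
      calc dist x y / max Ku Kf ≤ dist x y / Ku :=
            div_le_div_of_nonneg_left dist_nonneg hKu0 (le_max_left _ _)
        _ ≤ (Ku * dist (f x) (f y) + (Cu + 2 * M)) / Ku := by gcongr
        _ = dist (f x) (f y) + (Cu + 2 * M) / Ku := by field_simp
        _ ≤ dist (f x) (f y) + (Cu + 2 * M) := by
            gcongr; exact div_le_self (by positivity) hKu
    linarith
  · calc dist (f x) (f y) ≤ Kf * dist x y + Cf := hf x y
      _ ≤ max Ku Kf * dist x y + (Cu + 2 * M + Cf + M') := by
        gcongr
        · exact le_max_right _ _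
        · linarith

end CoarseMaps

theorem statement12_general {G X X' : Type*} [Group G] [MetricSpace X] [MetricSpace X']
    [MulAction G X] [MulAction G X']
    (hisoX : IsometricAction G X) (hisoX' : IsometricAction G X')
    (hcbX : CoboundedAction G X) (hcbX' : CoboundedAction G X')
    (u : X' → X) (hu1 : CoarselyEquivariant G u) (hu2 : CoarselyLipschitz u) :
    ∀ f : X → X', CoarselyEquivariant G f → CoarselyLipschitz f → IsQuasiIsometry f := by
  intro f hf1 hf2
  obtain ⟨M, hM, huf⟩ :=
    (hu1.comp hu2 hf1).exists_dist_le_of_cobounded hisoX hcbX (hu2.comp hf2)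
  obtain ⟨M', hM', hfu⟩ :=
    (hf1.comp hf2 hu1).exists_dist_le_of_cobounded hisoX' hcbX' (hf2.comp hu2)
  exact .of_coarse_inverse hf2 hu2 hM hM' huf hfu

/-- Equivalent cobounded actions: coarsely equivariant coarsely Lipschitz
maps between them are quasi-isometries. If the cobounded isometric actions of `G` on `X`
and `X'` satisfy `X ⪯ X'` and `X' ⪯ X`, then every coarsely `G`-equivariant coarsely
Lipschitz map `X → X'` is a quasi-isometry. -/
theorem statement12 {G X X' : Type*} [Group G] [MetricSpace X] [MetricSpace X']
    [MulAction G X] [MulAction G X']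
    (hisoX : IsometricAction G X) (hisoX' : IsometricAction G X')
    (hcbX : CoboundedAction G X) (hcbX' : CoboundedAction G X')
    (u : X' → X) (hu1 : CoarselyEquivariant G u) (hu2 : CoarselyLipschitz u)
    (v : X → X') (hv1 : CoarselyEquivariant G v) (hv2 : CoarselyLipschitz v) :
    ∀ f : X → X', CoarselyEquivariant G f → CoarselyLipschitz f → IsQuasiIsometry f :=
  statement12_general hisoX hisoX' hcbX hcbX' u hu1 hu2
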